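/- Let d^{AD}_n be the number of signed derangements in D_n of even type-D length. Then d^{AD}_1 = 0, d^{AD}_2 = 1, and for all n ≥ 3, d^{AD}_n = (2n-1)·d^{AD}_{n-1} + 2(n-1)·d^{AD}_{n-2} + (-1)^{n-1}(2n-3). -/

import Mathlib

open Finset

/-- `w : Fin n → ℤ` is a signed permutation of `{1,…,n}`: the absolute values of its
entries form a permutation of `{1,…,n}`. -/
def isSignedPerm (n : ℕ) (w : Fin n → ℤ) : Prop :=
  (∀ i, 1 ≤ (w i).natAbs ∧ (w i).natAbs ≤ n) ∧
    Function.Injective fun i => (w i).natAbs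

/-- The inversion number of the word `w`, with respect to the usual order on `ℤ`. -/
def invW (n : ℕ) (w : Fin n → ℤ) : ℕ :=
  ((Finset.univ : Finset (Fin n × Fin n)).filter fun p => p.1 < p.2 ∧ w p.2 < w p.1).card

/-- The type-`B` length: `ℓ_B(w) = inv(w) - ∑_{i : w_i < 0} w_i`. -/
def lenB (n : ℕ) (w : Fin n → ℤ) : ℤ :=
  (invW n w : ℤ) - ∑ i ∈ Finset.univ.filter (fun i : Fin n => w i < 0), w i

/-- `w` is a signed derangement: no entry satisfies `w_i = i` (in 1-indexed notation). -/
def isDerang (n : ℕ) (w : Fin n → ℤ) : Prop :=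
  ∀ i : Fin n, w i ≠ ((i : ℕ) : ℤ) + 1

/-- The number of negative entries of `w`. -/
def negCount (n : ℕ) (w : Fin n → ℤ) : ℕ :=
  (Finset.univ.filter fun i : Fin n => w i < 0).card

/-- The type-`D` length: `ℓ_D(w) = inv(w) - ∑_{i : w_i < 0} (w_i + 1)`. -/
def lenD (n : ℕ) (w : Fin n → ℤ) : ℤ :=
  (invW n w : ℤ) - ∑ i ∈ Finset.univ.filter (fun i : Fin n => w i < 0), (w i + 1)

/-- The number of signed derangements in the even-signed permutation group `D_n`
(signed permutations with an even number of negative entries) whose type-`D` length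
is even. -/
noncomputable def dAD (n : ℕ) : ℕ :=
  Set.ncard {w : Fin n → ℤ |
    isSignedPerm n w ∧ Even (negCount n w) ∧ isDerang n w ∧ Even (lenD n w)}

/-!
Write a signed permutation as a pair `(σ, S)`: `|w_i| = σ i + 1` and `S` is the set of negative
positions. Then `ℓ_D(w) = inv(w) + ∑_{i ∈ S} σ i`, and comparing `inv(w)` with `inv(σ)` pair by
pair shows `ℓ_D(w) ≡ inv(σ) (mod 2)`. So `d^{AD}_n` counts pairs with `σ` even, `|S|` even and
`Fix σ ⊆ S`. Writing both parity conditions as `(1 + ε)/2` and summing over `S` first,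
`4 d^{AD}_n = ∑_σ 2^{|supp σ|} + ∑_σ sgn σ · 2^{|supp σ|} + 2(-1)^n`. The first sum is the number
`b_n` of signed derangements of type `B`, with `b_n = 2n b_{n-1} + (-1)^n` by inclusion–exclusion;
the second is `det (2J - I) = (-1)^n (1 - 2n)`. Hence `4 d^{AD}_n = b_n + (-1)^n (3 - 2n)`, and
eliminating `b` gives the recurrence.
-/

open Equiv

theorem Finset.sum_sum_eq_sum_sum_lt_add_swap {α M : Type*} [Fintype α] [LinearOrder α]
    [AddCommMonoid M] (f : α → α → M) (hf : ∀ i, f i i = 0) :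
    ∑ i, ∑ j, f i j = ∑ i, ∑ j, if i < j then f i j + f j i else 0 := by
  calc ∑ i, ∑ j, f i j
        = ∑ i, ∑ j, ((if i < j then f i j else 0) + if j < i then f i j else 0) := by
          refine sum_congr rfl fun i _ => sum_congr rfl fun j _ => ?_
          rcases lt_trichotomy i j with h | rfl | h
          · simp [h, h.not_gt]
          · simp [hf]
          · simp [h, h.not_gt]
    _ = ∑ i, ∑ j, (if i < j then f i j else 0) + ∑ j, ∑ i, if j < i then f i j else 0 := by
          simp only [sum_add_distrib]; rw [sum_comm (f := fun i j => if j < i then f i j else 0)]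
    _ = ∑ i, ∑ j, if i < j then f i j + f j i else 0 := by
          simp only [← sum_add_distrib]
          refine sum_congr rfl fun i _ => sum_congr rfl fun j _ => ?_
          split_ifs <;> simp

namespace Equiv.Perm

section Fin

variable {n : ℕ}

def numInversions (σ : Perm (Fin n)) : ℕ :=
  #{p : Fin n × Fin n | p.1 < p.2 ∧ σ p.2 < σ p.1}

theorem sign_eq_neg_one_pow_numInversions (σ : Perm (Fin n)) :
    sign σ = (-1) ^ σ.numInversions := by
  have hpair : ∀ i j, i < j → (if σ i < σ j then (1 : ℤˣ) else -1) =
      if σ j < σ i then -1 else 1 := fun i j hij => by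
    rcases lt_trichotomy (σ i) (σ j) with h | h | h
    · simp [h, h.not_gt]
    · exact absurd (σ.injective h) hij.ne
    · simp [h, h.not_gt]
  calc sign σ = ∏ i, ∏ j ∈ Ioi i, (if σ i < σ j then (1 : ℤˣ) else -1) :=
        sign_eq_prod_prod_Ioi σ
    _ = ∏ p : Fin n × Fin n, if p.1 < p.2 ∧ σ p.2 < σ p.1 then -1 else 1 := by
        rw [Fintype.prod_prod_type]
        refine prod_congr rfl fun i _ => ?_
        rw [← filter_lt_eq_Ioi, prod_filter]
        refine prod_congr rfl fun j _ => ?_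
        by_cases hij : i < j <;> simp [hij, hpair]
    _ = (-1) ^ σ.numInversions := by
        rw [prod_ite, prod_const, prod_const_one, mul_one, numInversions]

theorem sign_eq_one_iff_even_numInversions (σ : Perm (Fin n)) :
    sign σ = 1 ↔ Even σ.numInversions := by
  rw [sign_eq_neg_one_pow_numInversions, neg_one_pow_eq_one_iff_even (by decide)]

theorem card_filter_apply_lt (σ : Perm (Fin n)) (i : Fin n) :
    #{j | σ j < σ i} = σ i := by
  rw [card_equiv σ (t := Iio (σ i)) (by simp), Fin.card_Iio]

end Fin

theorem two_pow_card_support_eq_prod {α : Type*} [Fintype α] [DecidableEq α] (σ : Perm α) :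
    (2 : ℤ) ^ #σ.support = ∏ i, if σ i = i then 1 else 2 := by
  rw [prod_ite, prod_const_one, one_mul, prod_const, support]

end Equiv.Perm

section SignedWord

variable {n : ℕ}

def signedWord (σ : Perm (Fin n)) (S : Finset (Fin n)) : Fin n → ℤ :=
  fun i => if i ∈ S then -((σ i : ℕ) + 1 : ℤ) else ((σ i : ℕ) + 1 : ℤ)

variable {σ : Perm (Fin n)} {S : Finset (Fin n)}

@[simp]
theorem signedWord_neg_iff {i : Fin n} : signedWord σ S i < 0 ↔ i ∈ S := by
  unfold signedWord; split_ifs with h <;> simp only [h, iff_true, iff_false] <;> omega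

@[simp]
theorem natAbs_signedWord (i : Fin n) : (signedWord σ S i).natAbs = σ i + 1 := by
  unfold signedWord; split_ifs <;> omega

theorem isSignedPerm_signedWord : isSignedPerm n (signedWord σ S) := by
  refine ⟨fun i => ?_, fun i j h => σ.injective (Fin.ext ?_)⟩
  · simp only [natAbs_signedWord]; omega
  · simpa using h

theorem signedWord_injective :
    Function.Injective fun p : Perm (Fin n) × Finset (Fin n) => signedWord p.1 p.2 := by
  rintro ⟨σ, S⟩ ⟨τ, T⟩ h
  have hw : ∀ i, signedWord σ S i = signedWord τ T i := congrFun h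
  refine Prod.ext (Equiv.ext fun i => Fin.ext ?_) (Finset.ext fun i => ?_)
  · simpa using congrArg Int.natAbs (hw i)
  · rw [← signedWord_neg_iff (σ := σ), ← signedWord_neg_iff (σ := τ), hw]

theorem exists_signedWord_eq {w : Fin n → ℤ} (hw : isSignedPerm n w) :
    ∃ σ S, signedWord σ S = w := by
  let e : Fin n → Fin n := fun i => ⟨(w i).natAbs - 1, by have := hw.1 i; omega⟩
  have he : Function.Injective e := fun i j hij => hw.2 <| by
    have := (hw.1 i).1; have := (hw.1 j).1; have := congrArg Fin.val hij
    simp only [e] at this; simp only; omega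
  refine ⟨Equiv.ofBijective e he.bijective_of_finite, ({i | w i < 0} : Finset (Fin n)),
    funext fun i => ?_⟩
  have := (hw.1 i).1
  simp only [signedWord, Finset.mem_filter, Finset.mem_univ, true_and, Equiv.ofBijective_apply, e]
  split_ifs <;> omega

theorem negCount_signedWord : negCount n (signedWord σ S) = #S := by
  simp [negCount]

theorem isDerang_signedWord_iff : isDerang n (signedWord σ S) ↔ σ.supportᶜ ⊆ S := by
  simp only [isDerang, Finset.subset_iff, Finset.mem_compl, Perm.mem_support, not_not]
  refine forall_congr' fun i => ?_
  by_cases hi : i ∈ S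
  · simp only [hi, imp_true_iff, iff_true]
    have := (signedWord_neg_iff (σ := σ)).2 hi
    omega
  · simp only [signedWord, hi, if_false, imp_false, ne_eq, add_left_inj, Nat.cast_inj,
      Fin.val_inj]

theorem lenD_signedWord :
    lenD n (signedWord σ S) = invW n (signedWord σ S) + ∑ i ∈ S, ((σ i : ℕ) : ℤ) := by
  have hS : ({i | signedWord σ S i < 0} : Finset (Fin n)) = S := by ext; simp
  rw [lenD, hS, sub_eq_add_neg, ← sum_neg_distrib]
  congr 1
  refine sum_congr rfl fun i hi => ?_
  simp [signedWord, hi]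

theorem even_lenD_signedWord_iff : Even (lenD n (signedWord σ S)) ↔ Even σ.numInversions := by
  set w := signedWord σ S
  let negDom : Fin n → Fin n → ℕ := fun i j => if i ∈ S ∧ σ j < σ i then 1 else 0
  have hsum : ∑ i ∈ S, (σ i : ℕ) = ∑ i, ∑ j, negDom i j := by
    calc ∑ i ∈ S, (σ i : ℕ) = ∑ i, if i ∈ S then #{j | σ j < σ i} else 0 := by
          simp [σ.card_filter_apply_lt]
      _ = ∑ i, ∑ j, negDom i j :=
          sum_congr rfl fun i _ => by split_ifs with h <;> simp [negDom, h]
  have hlen : lenD n w = ((invW n w + ∑ i ∈ S, (σ i : ℕ) : ℕ) : ℤ) := by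
    rw [lenD_signedWord]; push_cast; rfl
  -- For `i < j`, the comparisons of `w_i, w_j` and of `σ i, σ j` disagree exactly when the entry
  -- of larger absolute value is negative, i.e. when `negDom i j + negDom j i = 1`.
  have key : Even (invW n w + ∑ i, ∑ j, negDom i j + σ.numInversions) := by
    rw [sum_sum_eq_sum_sum_lt_add_swap negDom (by simp [negDom]), invW, Perm.numInversions,
      card_filter, card_filter, Fintype.sum_prod_type, Fintype.sum_prod_type,
      ← sum_add_distrib, ← sum_add_distrib]
    refine even_sum _ fun i _ => ?_
    rw [← sum_add_distrib, ← sum_add_distrib]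
    refine even_sum _ fun j _ => ?_
    by_cases hij : i < j
    · have hne : (σ i : ℕ) ≠ σ j := fun h => hij.ne (σ.injective (Fin.ext h))
      by_cases hi : i ∈ S <;> by_cases hj : j ∈ S <;>
        simp only [w, signedWord, negDom, hij, hi, hj, true_and, false_and, if_true, if_false,
          Fin.lt_def, Nat.even_iff] <;>
        split_ifs <;> omega
    · simp [hij]
  rwa [hlen, Int.even_coe_nat, hsum, ← Nat.even_add]

end SignedWord

def evenDerangementPairs (α : Type*) [Fintype α] [DecidableEq α] : Finset (Perm α × Finset α) :=
  {p | Perm.sign p.1 = 1 ∧ Even #p.2 ∧ p.1.supportᶜ ⊆ p.2}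

theorem mem_evenDerangementPairs_iff {n : ℕ} {σ : Perm (Fin n)} {S : Finset (Fin n)} :
    (σ, S) ∈ evenDerangementPairs (Fin n) ↔
      isSignedPerm n (signedWord σ S) ∧ Even (negCount n (signedWord σ S)) ∧
        isDerang n (signedWord σ S) ∧ Even (lenD n (signedWord σ S)) := by
  simp only [evenDerangementPairs, mem_filter, mem_univ, true_and, isSignedPerm_signedWord,
    negCount_signedWord, isDerang_signedWord_iff, even_lenD_signedWord_iff,
    Perm.sign_eq_one_iff_even_numInversions]
  tauto

theorem dAD_eq_card_evenDerangementPairs (n : ℕ) : dAD n = #(evenDerangementPairs (Fin n)) := by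
  have hset : {w : Fin n → ℤ |
      isSignedPerm n w ∧ Even (negCount n w) ∧ isDerang n w ∧ Even (lenD n w)} =
      (fun p : Perm (Fin n) × Finset (Fin n) => signedWord p.1 p.2) ''
        ↑(evenDerangementPairs (Fin n)) := by
    ext w
    constructor
    · intro hw
      obtain ⟨σ, S, rfl⟩ := exists_signedWord_eq hw.1
      exact ⟨(σ, S), mem_evenDerangementPairs_iff.2 hw, rfl⟩
    · rintro ⟨⟨σ, S⟩, hp, rfl⟩
      exact mem_evenDerangementPairs_iff.1 hp
  rw [dAD, hset, Set.ncard_image_of_injective _ signedWord_injective, Set.ncard_coe_finset]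

def numSignedDerangements (n : ℕ) : ℤ :=
  ∑ m ∈ range (n + 1), n.choose m * ((-1) ^ m * 2 ^ (n - m) * (n - m).factorial)

theorem numSignedDerangements_zero : numSignedDerangements 0 = 1 := by
  simp [numSignedDerangements]

theorem numSignedDerangements_succ (n : ℕ) :
    numSignedDerangements (n + 1) = 2 * (n + 1) * numSignedDerangements n + (-1) ^ (n + 1) := by
  rw [numSignedDerangements, sum_range_succ, numSignedDerangements, mul_sum]
  congr 1
  · refine sum_congr rfl fun m hm => ?_
    have hmn : m ≤ n := Nat.lt_succ_iff.1 (mem_range.1 hm)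
    have hchoose : ((n + 1).choose m : ℤ) * (n + 1 - m : ℕ) = n.choose m * (n + 1) := by
      exact_mod_cast (Nat.choose_mul_succ_eq n m).symm
    rw [Nat.sub_add_comm hmn] at hchoose ⊢
    rw [Nat.factorial_succ, pow_succ]
    push_cast at hchoose ⊢
    linear_combination (2 * (-1) ^ m * 2 ^ (n - m) * ((n - m).factorial : ℤ)) * hchoose
  · simp

section Counting

variable {α : Type*} [Fintype α] [DecidableEq α]

theorem card_filter_forall_mem_apply_eq (T : Finset α) :
    #{σ : Perm α | ∀ i ∈ T, σ i = i} = (Fintype.card α - #T).factorial := by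
  rw [← Fintype.card_subtype, ← card_compl, ← Fintype.card_coe, ← Fintype.card_perm]
  exact Fintype.card_congr <| (Equiv.subtypeEquivRight fun σ => by simp).trans
    (Perm.subtypeEquivSubtypePerm (· ∈ Tᶜ)).symm

theorem sum_two_pow_card_support :
    ∑ σ : Perm α, (2 : ℤ) ^ #σ.support = numSignedDerangements (Fintype.card α) := by
  have hexpand : ∀ σ : Perm α, (2 : ℤ) ^ #σ.support = ∑ T : Finset α,
      (-1) ^ #T * 2 ^ (Fintype.card α - #T) * if ∀ i ∈ T, σ i = i then 1 else 0 := fun σ => by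
    calc (2 : ℤ) ^ #σ.support = ∏ i, ((if σ i = i then -1 else 0) + 2) := by
          rw [Perm.two_pow_card_support_eq_prod]
          exact prod_congr rfl fun i _ => by split_ifs <;> norm_num
      _ = _ := by
          rw [prod_add, ← powerset_univ]
          refine sum_congr rfl fun T _ => ?_
          rw [prod_ite_zero, prod_const, prod_const, ← compl_eq_univ_sdiff, card_compl]
          split_ifs <;> ring
  calc ∑ σ : Perm α, (2 : ℤ) ^ #σ.support
      = ∑ T : Finset α, (-1 : ℤ) ^ #T * 2 ^ (Fintype.card α - #T) *
          (Fintype.card α - #T).factorial := by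
        simp only [hexpand]
        rw [sum_comm]
        refine sum_congr rfl fun T _ => ?_
        rw [← mul_sum, sum_boole, card_filter_forall_mem_apply_eq]
    _ = _ := by
        rw [← powerset_univ, sum_powerset_apply_card (fun k => (-1 : ℤ) ^ k *
          2 ^ (Fintype.card α - k) * ((Fintype.card α - k).factorial : ℤ)), card_univ,
          numSignedDerangements]
        simp only [nsmul_eq_mul]

theorem sum_sign_mul_two_pow_card_support :
    ∑ σ : Perm α, (Perm.sign σ : ℤ) * 2 ^ #σ.support =
      (-1) ^ Fintype.card α * (1 - 2 * Fintype.card α) := by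
  -- `M = 2J - I`, written as `-(1 + u vᵀ)` for the matrix determinant lemma
  let M : Matrix α α ℤ := -(1 + Matrix.replicateCol Unit (fun _ : α => (-2 : ℤ)) *
    Matrix.replicateRow Unit (fun _ : α => (1 : ℤ)))
  have hM : ∀ i j, M i j = if i = j then 1 else 2 := fun i j => by
    by_cases h : i = j <;> simp [M, Matrix.mul_apply, h]
  calc ∑ σ : Perm α, (Perm.sign σ : ℤ) * 2 ^ #σ.support = M.det := by
        simp only [Matrix.det_apply, hM, Perm.two_pow_card_support_eq_prod, Units.smul_def,
          zsmul_eq_mul, Int.cast_id]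
    _ = _ := by
        rw [Matrix.det_neg, Matrix.det_one_add_replicateCol_mul_replicateRow]
        simp only [dotProduct, one_mul, sum_const, card_univ, nsmul_eq_mul]
        ring

theorem sum_compl_subset_one_add_neg_one_pow_card (F : Finset α) :
    ∑ S with Fᶜ ⊆ S, (1 + (-1 : ℤ) ^ #S) =
      2 ^ #F + if F = ∅ then (-1) ^ Fintype.card α else 0 := by
  have hpow : ∀ U : Finset α, (-1 : ℤ) ^ #Uᶜ = (-1) ^ Fintype.card α * (-1) ^ #U := fun U => by
    rw [← card_compl_add_card U, pow_add, mul_assoc, ← pow_add, ← two_mul, pow_mul, neg_one_sq,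
      one_pow, mul_one]
  calc ∑ S with Fᶜ ⊆ S, (1 + (-1 : ℤ) ^ #S) = ∑ U ∈ F.powerset, (1 + (-1 : ℤ) ^ #Uᶜ) :=
        sum_nbij' (·ᶜ) (·ᶜ)
          (fun _ hS => mem_powerset.2 (compl_le_iff_compl_le.1 (mem_filter.1 hS).2))
          (fun _ hU => mem_filter.2 ⟨mem_univ _, compl_subset_compl.2 (mem_powerset.1 hU)⟩)
          (by simp) (by simp) (by simp)
    _ = _ := by
        rw [sum_add_distrib, sum_const, card_powerset, nsmul_one]
        simp only [hpow, ← mul_sum, sum_powerset_neg_one_pow_card]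
        split_ifs <;> simp

theorem four_mul_card_evenDerangementPairs :
    4 * (#(evenDerangementPairs α) : ℤ) =
      numSignedDerangements (Fintype.card α) +
        (-1) ^ Fintype.card α * (3 - 2 * Fintype.card α) := by
  calc 4 * (#(evenDerangementPairs α) : ℤ)
      = ∑ σ : Perm α, ∑ S with σ.supportᶜ ⊆ S,
          (1 + (Perm.sign σ : ℤ)) * (1 + (-1) ^ #S) := by
        rw [evenDerangementPairs, card_filter, Nat.cast_sum, mul_sum, Fintype.sum_prod_type]
        refine sum_congr rfl fun σ _ => ?_
        rw [sum_filter]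
        refine sum_congr rfl fun S _ => ?_
        rcases Int.units_eq_one_or (Perm.sign σ) with h | h <;>
          rcases Nat.even_or_odd #S with hS | hS <;>
          by_cases hF : σ.supportᶜ ⊆ S <;>
          simp [h, hS, hF, hS.neg_one_pow, Nat.not_even_iff_odd]
    _ = ∑ σ : Perm α, (1 + (Perm.sign σ : ℤ)) *
          (2 ^ #σ.support + if σ = 1 then (-1) ^ Fintype.card α else 0) := by
        simp only [← mul_sum, sum_compl_subset_one_add_neg_one_pow_card, Perm.support_eq_empty_iff]
    _ = ∑ σ : Perm α, (2 : ℤ) ^ #σ.support + ∑ σ : Perm α, (Perm.sign σ : ℤ) * 2 ^ #σ.support +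
          2 * (-1) ^ Fintype.card α := by
        simp only [mul_add, add_mul, one_mul, sum_add_distrib, mul_ite, mul_zero, sum_ite_eq',
          mem_univ, if_true, Perm.sign_one, Units.val_one]
        ring
    _ = _ := by
        rw [sum_two_pow_card_support, sum_sign_mul_two_pow_card_support]
        ring

end Counting

theorem four_mul_dAD (n : ℕ) :
    4 * (dAD n : ℤ) = numSignedDerangements n + (-1) ^ n * (3 - 2 * n) := by
  simpa [dAD_eq_card_evenDerangementPairs] using four_mul_card_evenDerangementPairs (α := Fin n)

theorem stmt16 :
    dAD 1 = 0 ∧ dAD 2 = 1 ∧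
    ∀ n : ℕ, 3 ≤ n →
      (dAD n : ℤ) = (2 * (n : ℤ) - 1) * (dAD (n - 1) : ℤ) +
        2 * ((n : ℤ) - 1) * (dAD (n - 2) : ℤ) + (-1 : ℤ) ^ (n - 1) * (2 * (n : ℤ) - 3) := by
  refine ⟨?_, ?_, fun n hn => ?_⟩
  · have h : 4 * (dAD 1 : ℤ) = 0 := by
      rw [four_mul_dAD, numSignedDerangements_succ, numSignedDerangements_zero]; norm_num
    omega
  · have h : 4 * (dAD 2 : ℤ) = 4 := by
      rw [four_mul_dAD, numSignedDerangements_succ, numSignedDerangements_succ,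
        numSignedDerangements_zero]; norm_num
    omega
  · obtain ⟨m, rfl⟩ : ∃ m, n = m + 3 := ⟨n - 3, by omega⟩
    have h3 := four_mul_dAD (m + 3)
    have h2 := four_mul_dAD (m + 2)
    have h1 := four_mul_dAD (m + 1)
    have hb3 := numSignedDerangements_succ (m + 2)
    have hb2 := numSignedDerangements_succ (m + 1)
    simp only [show m + 3 - 1 = m + 2 by omega, show m + 3 - 2 = m + 1 by omega]
    push_cast at h3 h2 h1 hb3 hb2 ⊢
    refine mul_left_cancel₀ (four_ne_zero : (4 : ℤ) ≠ 0) ?_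
    linear_combination h3 - (2 * (m : ℤ) + 5) * h2 - (2 * (m : ℤ) + 4) * h1 + hb3 + hb2
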